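/- Let p, q, a, b : [t₀, t₁] → ℝ² be continuous motions of four points with p(t) ≠ q(t) for all t. Say the configuration is 'violated' at time t if a(t) and b(t) lie in opposite open halfplanes bounded by the line through p(t) and q(t) and b(t) lies in the open interior of the circumdisc of p(t), q(t), a(t). Suppose the configuration is violated at t₀ but not at t₁. Then there exists t ∈ (t₀, t₁] at which (i) a(t) lies on the closed segment [p(t), q(t)], or (ii) b(t) lies on the closed segment [p(t), q(t)], or (iii) the four points p(t), q(t), a(t), b(t) lie on a common circle. -/

import Mathlib

noncomputable section

/-- Points of the Euclidean plane. -/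
abbrev Pt := EuclideanSpace ℝ (Fin 2)

/-- The orientation (cross product) determinant of the triple `(p, q, r)`. -/
def orient (p q r : Pt) : ℝ :=
  (q 0 - p 0) * (r 1 - p 1) - (q 1 - p 1) * (r 0 - p 0)

/-- The Delaunayhood of the edge `pq` is violated by the pair `a, b`: the points `a`
and `b` lie in opposite open halfplanes bounded by the line `pq`, and `b` lies in the
open interior of the circumdisc of `p, q, a`. -/
def Violated (p q a b : Pt) : Prop :=
  orient p q a * orient p q b < 0 ∧
    ∃ c : Pt, ∃ ρ : ℝ, dist p c = ρ ∧ dist q c = ρ ∧ dist a c = ρ ∧ dist b c < ρ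

/-!
The violated configurations form an open subset of `(ℝ²)⁴`: in coordinates, `Violated p q a b`
says `orient p q a * orient p q b < 0` and `incircle p q a b * orient p q a < 0`, where
`incircle` is the in-circle determinant. Since `[t₀, t₁]` is connected, the motion reaches the
frontier of this set at some `τ ∈ (t₀, t₁]`. There the non-strict inequalities still hold, as
does the closed consequence that `a` or `b` lies in the closed disc on diameter `pq`, but one
strict inequality fails. Either `a` or `b` is on the line `pq` and in that disc, hence on the
segment `[p, q]`, or both are off the line and the in-circle determinant vanishes, which is
co-circularity.
-/

open Set

theorem exists_mem_Ioc_mem_closure_notMem {X : Type*} [TopologicalSpace X] {U : Set X}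
    (hU : IsOpen U) {γ : ℝ → X} {t₀ t₁ : ℝ} (ht : t₀ ≤ t₁) (hγ : ContinuousOn γ (Icc t₀ t₁))
    (h₀ : γ t₀ ∈ U) (h₁ : γ t₁ ∉ U) : ∃ τ ∈ Ioc t₀ t₁, γ τ ∈ closure U ∧ γ τ ∉ U := by
  by_contra! h
  refine h₁ ((isPreconnected_Icc.image γ hγ).subset_of_closure_inter_subset hU
    ⟨γ t₀, mem_image_of_mem γ (left_mem_Icc.2 ht), h₀⟩ ?_
    (mem_image_of_mem γ (right_mem_Icc.2 ht)))
  rintro _ ⟨hcl, τ, hτ, rfl⟩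
  rcases hτ.1.eq_or_lt with rfl | hlt
  · exact h₀
  · exact h τ ⟨hlt, hτ.2⟩ hcl

namespace Delaunay

/-- The power of `x` with respect to the circle on diameter `pq`: it is `≤ 0` exactly on the
closed disc with that diameter. -/
def diamPower (p q x : Pt) : ℝ := (x 0 - p 0) * (x 0 - q 0) + (x 1 - p 1) * (x 1 - q 1)

/-- The in-circle determinant: its sign relative to `orient p q a` tells on which side of the
circumcircle of `p, q, a` the point `b` lies. -/
def incircle (p q a b : Pt) : ℝ := diamPower p q b * orient p q a - diamPower p q a * orient p q b

lemma dist_sq_eq (x c : Pt) : dist x c ^ 2 = (x 0 - c 0) ^ 2 + (x 1 - c 1) ^ 2 := by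
  rw [EuclideanSpace.dist_eq, Real.sq_sqrt (by positivity)]
  simp [Fin.sum_univ_two, Real.dist_eq, sq_abs]

lemma dist_eq_dist_of_sq {u v c : Pt}
    (h : (u 0 - c 0) ^ 2 + (u 1 - c 1) ^ 2 = (v 0 - c 0) ^ 2 + (v 1 - c 1) ^ 2) :
    dist u c = dist v c := by
  rw [← sq_eq_sq₀ dist_nonneg dist_nonneg, dist_sq_eq, dist_sq_eq, h]

lemma incircle_eq_of_dist_eq {p q a c : Pt} {ρ : ℝ} (hp : dist p c = ρ) (hq : dist q c = ρ)
    (ha : dist a c = ρ) (b : Pt) :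
    incircle p q a b = (dist b c ^ 2 - ρ ^ 2) * orient p q a := by
  subst hp
  have hq := congrArg (· ^ 2) hq
  have ha := congrArg (· ^ 2) ha
  simp only [dist_sq_eq, incircle, diamPower, orient] at hq ha ⊢
  linear_combination ((a 0 - p 0) * (b 1 - p 1) - (a 1 - p 1) * (b 0 - p 0)) * hq
    - ((q 0 - p 0) * (b 1 - p 1) - (q 1 - p 1) * (b 0 - p 0)) * ha

/-- The circumcentre of a non-degenerate triangle, by Cramer's rule on the two perpendicular
bisector equations `2 c · (q - p) = |q|² - |p|²` and `2 c · (a - p) = |a|² - |p|²`. -/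
lemma exists_circumcenter {p q a : Pt} (h : orient p q a ≠ 0) :
    ∃ c : Pt, dist q c = dist p c ∧ dist a c = dist p c := by
  obtain ⟨u, hu⟩ : ∃ u, 2 * orient p q a * u = 1 :=
    ⟨_, mul_inv_cancel₀ (mul_ne_zero two_ne_zero h)⟩
  unfold orient at hu
  refine ⟨!₂[((q 0 ^ 2 + q 1 ^ 2 - p 0 ^ 2 - p 1 ^ 2) * (a 1 - p 1)
        - (a 0 ^ 2 + a 1 ^ 2 - p 0 ^ 2 - p 1 ^ 2) * (q 1 - p 1)) * u,
      ((q 0 - p 0) * (a 0 ^ 2 + a 1 ^ 2 - p 0 ^ 2 - p 1 ^ 2)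
        - (a 0 - p 0) * (q 0 ^ 2 + q 1 ^ 2 - p 0 ^ 2 - p 1 ^ 2)) * u],
    dist_eq_dist_of_sq ?_, dist_eq_dist_of_sq ?_⟩ <;>
  simp only [Matrix.cons_val_zero, Matrix.cons_val_one]
  · linear_combination (p 0 ^ 2 + p 1 ^ 2 - q 0 ^ 2 - q 1 ^ 2) * hu
  · linear_combination (p 0 ^ 2 + p 1 ^ 2 - a 0 ^ 2 - a 1 ^ 2) * hu

lemma violated_iff {p q a b : Pt} :
    Violated p q a b ↔ orient p q a * orient p q b < 0 ∧ incircle p q a b * orient p q a < 0 := by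
  refine and_congr_right fun hab => ?_
  have ha : orient p q a ≠ 0 := left_ne_zero_of_mul hab.ne
  constructor
  · rintro ⟨c, ρ, hp, hq, ha', hb⟩
    rw [incircle_eq_of_dist_eq hp hq ha' b]
    have : dist b c ^ 2 < ρ ^ 2 := pow_lt_pow_left₀ hb dist_nonneg two_ne_zero
    nlinarith [sq_pos_of_ne_zero ha]
  · intro hin
    obtain ⟨c, hq, ha'⟩ := exists_circumcenter ha
    refine ⟨c, dist p c, rfl, hq, ha', ?_⟩
    rw [incircle_eq_of_dist_eq rfl hq ha' b] at hin
    have : dist b c ^ 2 < dist p c ^ 2 := by nlinarith [sq_pos_of_ne_zero ha]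
    exact lt_of_pow_lt_pow_left₀ 2 dist_nonneg this

lemma exists_concyclic_of_incircle_eq_zero {p q a b : Pt} (ha : orient p q a ≠ 0)
    (h : incircle p q a b = 0) :
    ∃ c : Pt, ∃ ρ : ℝ, dist p c = ρ ∧ dist q c = ρ ∧ dist a c = ρ ∧ dist b c = ρ := by
  obtain ⟨c, hq, ha'⟩ := exists_circumcenter ha
  refine ⟨c, dist p c, rfl, hq, ha', ?_⟩
  rw [incircle_eq_of_dist_eq rfl hq ha' b] at h
  have : dist b c ^ 2 = dist p c ^ 2 := by
    linarith [(mul_eq_zero.mp h).resolve_right ha]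
  exact (sq_eq_sq₀ dist_nonneg dist_nonneg).mp this

lemma mem_segment_of_orient_eq_zero {p q x : Pt} (ho : orient p q x = 0)
    (hd : diamPower p q x ≤ 0) : x ∈ segment ℝ p q := by
  unfold orient at ho
  unfold diamPower at hd
  set L := (q 0 - p 0) ^ 2 + (q 1 - p 1) ^ 2
  rcases (by positivity : 0 ≤ L).eq_or_lt with hL | hL
  · have hq0 : q 0 = p 0 := by nlinarith [sq_nonneg (q 0 - p 0), sq_nonneg (q 1 - p 1)]
    have hq1 : q 1 = p 1 := by nlinarith [sq_nonneg (q 0 - p 0), sq_nonneg (q 1 - p 1)]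
    rw [hq0, hq1] at hd
    have hx : x = p := by
      refine PiLp.ext (Fin.forall_fin_two.2 ⟨?_, ?_⟩) <;>
        refine sub_eq_zero.1 (pow_eq_zero_iff two_ne_zero |>.1 ?_) <;>
        nlinarith [sq_nonneg (x 0 - p 0), sq_nonneg (x 1 - p 1)]
    exact hx ▸ left_mem_segment ℝ p q
  · -- `x - p = s (q - p)` with `s` the projection coefficient; `diamPower = s (s - 1) L`
    obtain ⟨s, hs⟩ : ∃ s, s * L = (x 0 - p 0) * (q 0 - p 0) + (x 1 - p 1) * (q 1 - p 1) :=
      ⟨_, div_mul_cancel₀ _ hL.ne'⟩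
    have hx0 : x 0 - p 0 = s * (q 0 - p 0) := by
      apply mul_right_cancel₀ hL.ne'
      linear_combination (q 0 - p 0) * hs.symm - (q 1 - p 1) * ho
    have hx1 : x 1 - p 1 = s * (q 1 - p 1) := by
      apply mul_right_cancel₀ hL.ne'
      linear_combination (q 1 - p 1) * hs.symm + (q 0 - p 0) * ho
    have hsL : s * (s - 1) * L ≤ 0 := by
      convert hd using 1
      linear_combination (-(x 0 - p 0) - s * (q 0 - p 0) + (q 0 - p 0)) * hx0
        + (-(x 1 - p 1) - s * (q 1 - p 1) + (q 1 - p 1)) * hx1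
    have hs01 : s * (s - 1) ≤ 0 := nonpos_of_mul_nonpos_left hsL hL
    refine ⟨1 - s, s, by nlinarith, by nlinarith, by ring, ?_⟩
    refine PiLp.ext (Fin.forall_fin_two.2 ⟨?_, ?_⟩) <;>
      simp only [PiLp.add_apply, PiLp.smul_apply, smul_eq_mul]
    · linear_combination -hx0
    · linear_combination -hx1

lemma Violated.diamPower_neg_or {p q a b : Pt} (h : Violated p q a b) :
    diamPower p q a < 0 ∨ diamPower p q b < 0 := by
  obtain ⟨hab, hin⟩ := violated_iff.mp h
  by_contra! hnn
  have : 0 ≤ incircle p q a b * orient p q a := by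
    simp only [incircle]
    nlinarith [mul_nonneg hnn.2 (sq_nonneg (orient p q a)),
      mul_nonneg hnn.1 (neg_nonneg.mpr hab.le)]
  exact this.not_gt hin

/-- A closed condition implied by `Violated`, hence still satisfied when a violation first fails. -/
def WeaklyViolated (p q a b : Pt) : Prop :=
  orient p q a * orient p q b ≤ 0 ∧ incircle p q a b * orient p q a ≤ 0 ∧
    0 ≤ incircle p q a b * orient p q b ∧ (diamPower p q a ≤ 0 ∨ diamPower p q b ≤ 0)

lemma Violated.weaklyViolated {p q a b : Pt} (h : Violated p q a b) : WeaklyViolated p q a b := by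
  obtain ⟨hab, hin⟩ := violated_iff.mp h
  refine ⟨hab.le, hin.le, ?_, (Violated.diamPower_neg_or h).imp le_of_lt le_of_lt⟩
  nlinarith [mul_pos_of_neg_of_neg hin hab, sq_nonneg (orient p q a)]

lemma WeaklyViolated.mem_segment_or_concyclic {p q a b : Pt} (h : WeaklyViolated p q a b)
    (hn : ¬ Violated p q a b) :
    a ∈ segment ℝ p q ∨ b ∈ segment ℝ p q ∨
      ∃ c : Pt, ∃ ρ : ℝ, dist p c = ρ ∧ dist q c = ρ ∧ dist a c = ρ ∧ dist b c = ρ := by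
  obtain ⟨hab, hia, hib, hd⟩ := h
  rw [violated_iff] at hn
  by_cases ha : orient p q a = 0
  · by_cases hb : orient p q b = 0
    · exact hd.imp (mem_segment_of_orient_eq_zero ha)
        (fun hd ↦ .inl (mem_segment_of_orient_eq_zero hb hd))
    · simp only [incircle, ha] at hib
      exact .inl (mem_segment_of_orient_eq_zero ha (by nlinarith [sq_pos_of_ne_zero hb]))
  · by_cases hb : orient p q b = 0
    · simp only [incircle, hb] at hia
      exact .inr (.inl (mem_segment_of_orient_eq_zero hb (by nlinarith [sq_pos_of_ne_zero ha])))
    · have hab' : orient p q a * orient p q b < 0 := hab.lt_of_ne (mul_ne_zero ha hb)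
      have hia0 : incircle p q a b * orient p q a = 0 :=
        hia.antisymm (not_lt.mp fun hlt ↦ hn ⟨hab', hlt⟩)
      exact .inr (.inr (exists_concyclic_of_incircle_eq_zero ha
        ((mul_eq_zero.mp hia0).resolve_right ha)))

def violatedSet : Set (Pt × Pt × Pt × Pt) := {x | Violated x.1 x.2.1 x.2.2.1 x.2.2.2}

lemma isOpen_violatedSet : IsOpen violatedSet := by
  have : violatedSet = {x | orient x.1 x.2.1 x.2.2.1 * orient x.1 x.2.1 x.2.2.2 < 0} ∩
      {x | incircle x.1 x.2.1 x.2.2.1 x.2.2.2 * orient x.1 x.2.1 x.2.2.1 < 0} := by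
    ext
    exact violated_iff
  rw [this]
  unfold incircle diamPower orient
  exact (isOpen_lt (by fun_prop) continuous_const).inter (isOpen_lt (by fun_prop) continuous_const)

lemma closure_violatedSet_subset :
    closure violatedSet ⊆ {x | WeaklyViolated x.1 x.2.1 x.2.2.1 x.2.2.2} := by
  refine closure_minimal (fun x hx ↦ Violated.weaklyViolated hx) ?_
  simp only [WeaklyViolated, ofPred_and, ofPred_or]
  unfold incircle diamPower orient
  refine (isClosed_le (by fun_prop) continuous_const).inter <|
    (isClosed_le (by fun_prop) continuous_const).inter <|
    (isClosed_le continuous_const (by fun_prop)).inter <|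
    (isClosed_le (by fun_prop) continuous_const).union (isClosed_le (by fun_prop) continuous_const)

end Delaunay

open Delaunay

theorem stmt13_general (t₀ t₁ : ℝ) (ht : t₀ ≤ t₁) (p q a b : ℝ → Pt)
    (hp : ContinuousOn p (Set.Icc t₀ t₁)) (hq : ContinuousOn q (Set.Icc t₀ t₁))
    (ha : ContinuousOn a (Set.Icc t₀ t₁)) (hb : ContinuousOn b (Set.Icc t₀ t₁))
    (h0 : Violated (p t₀) (q t₀) (a t₀) (b t₀))
    (h1 : ¬ Violated (p t₁) (q t₁) (a t₁) (b t₁)) :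
    ∃ t ∈ Set.Ioc t₀ t₁,
      a t ∈ segment ℝ (p t) (q t) ∨ b t ∈ segment ℝ (p t) (q t) ∨
        ∃ c : Pt, ∃ ρ : ℝ, dist (p t) c = ρ ∧ dist (q t) c = ρ ∧
          dist (a t) c = ρ ∧ dist (b t) c = ρ := by
  obtain ⟨τ, hτ, hcl, hn⟩ := exists_mem_Ioc_mem_closure_notMem isOpen_violatedSet ht
    (hp.prodMk (hq.prodMk (ha.prodMk hb))) h0 h1
  exact ⟨τ, hτ, WeaklyViolated.mem_segment_or_concyclic (closure_violatedSet_subset hcl) hn⟩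

/-- If four continuously moving points (with `p(t) ≠ q(t)` throughout) are such that
the Delaunayhood of `pq` is violated by `a, b` at time `t₀` but not at time `t₁`, then
at some time `t ∈ (t₀, t₁]` either `a` lies on the closed segment `[p, q]`, or `b` does,
or the four points are co-circular. -/
theorem stmt13 (t₀ t₁ : ℝ) (ht : t₀ ≤ t₁) (p q a b : ℝ → Pt)
    (hp : ContinuousOn p (Set.Icc t₀ t₁)) (hq : ContinuousOn q (Set.Icc t₀ t₁))
    (ha : ContinuousOn a (Set.Icc t₀ t₁)) (hb : ContinuousOn b (Set.Icc t₀ t₁))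
    (hne : ∀ t ∈ Set.Icc t₀ t₁, p t ≠ q t)
    (h0 : Violated (p t₀) (q t₀) (a t₀) (b t₀))
    (h1 : ¬ Violated (p t₁) (q t₁) (a t₁) (b t₁)) :
    ∃ t ∈ Set.Ioc t₀ t₁,
      a t ∈ segment ℝ (p t) (q t) ∨ b t ∈ segment ℝ (p t) (q t) ∨
        ∃ c : Pt, ∃ ρ : ℝ, dist (p t) c = ρ ∧ dist (q t) c = ρ ∧
          dist (a t) c = ρ ∧ dist (b t) c = ρ :=
  stmt13_general t₀ t₁ ht p q a b hp hq ha hb h0 h1
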